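/- arXiv:1202.4073 — 4 statements merged into one kernel-verified Lean document; each statement's English description precedes it below -/
import Mathlib

section
/- Let U, U', U₂, U₂' be real vector spaces forming a pullback square with injective maps i₁ : U₂ → U, i₂ : U₂' → U' and surjective maps j : U → U', j' : U₂ → U₂' (so U₂ is the fiber product of U and U₂' over U'). For any positive definite quadratic form q on U, the pushforward along j' of the restriction of q to U₂ equals the restriction to U₂' of the pushforward of q along j, where the pushforward j_*q is defined by (j_*q)(u') = min over u with j(u)=u' of q(u). -/
/-- Base change for positive definite quadratic forms: given a Cartesian square of
finite-dimensional real vector spaces with injective `i₁, i₂` and surjective `j, j'`,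
the pushforward along `j'` of the restriction of `q` along `i₁` equals the restriction
along `i₂` of the pushforward of `q` along `j`, where the pushforward is defined via
the infimum `(j_*q)(u') = inf { q u | j u = u' }` (attained, as `q` is positive
definite). -/
theorem pushforward_pullback_base_change
    (U U' U₂ U₂' : Type*)
    [AddCommGroup U] [Module ℝ U] [FiniteDimensional ℝ U]
    [AddCommGroup U'] [Module ℝ U'] [FiniteDimensional ℝ U']
    [AddCommGroup U₂] [Module ℝ U₂] [FiniteDimensional ℝ U₂]
    [AddCommGroup U₂'] [Module ℝ U₂'] [FiniteDimensional ℝ U₂']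
    (i₁ : U₂ →ₗ[ℝ] U) (i₂ : U₂' →ₗ[ℝ] U') (j : U →ₗ[ℝ] U') (j' : U₂ →ₗ[ℝ] U₂')
    (hi₁ : Function.Injective i₁) (hi₂ : Function.Injective i₂)
    (hj : Function.Surjective j) (hj' : Function.Surjective j')
    (hcomm : ∀ x : U₂, j (i₁ x) = i₂ (j' x))
    (hcart : ∀ (u : U) (u₂' : U₂'), j u = i₂ u₂' → ∃ u₂ : U₂, i₁ u₂ = u ∧ j' u₂ = u₂')
    (q : QuadraticForm ℝ U) (hq : q.PosDef) (u₂' : U₂') :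
    sInf ((fun u₂ => q (i₁ u₂)) '' (j' ⁻¹' {u₂'})) = sInf (q '' (j ⁻¹' {i₂ u₂'})) := by
  congr 1
  ext x
  simp only [Set.mem_image, Set.mem_preimage, Set.mem_singleton_iff]
  constructor
  · rintro ⟨u₂, h1, rfl⟩
    exact ⟨i₁ u₂, by rw [hcomm, h1], rfl⟩
  · rintro ⟨u, h1, rfl⟩
    obtain ⟨u₂, rfl, h3⟩ := hcart u u₂' h1
    exact ⟨u₂, h3, rfl⟩
end

section
/- Let V be a finite-dimensional real vector space with decomposition V = V' ⊕ V'', with positive definite quadratic forms q' on V' and q'' on V''. Then the map sending a positive definite quadratic form q on V satisfying q|_{V'} = q' and j_*q = q'' (where j : V → V'' is the projection and j_*q(v'') = min_{j(v)=v''} q(v)) to the induced bilinear pairing between V' and V'' is a bijection onto Hom_ℝ(V' ⊗ V'', ℝ). -/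
/-!
Fix `q'` and the pairing `B`. Two extensions with these data differ by a function of `v''`
alone, and the fibrewise infimum over `v'` pins that function down; this gives injectivity.
For surjectivity, represent `B` through `q'`, `B v' v'' = associated q' v' (L v'')`
(`V'` is finite-dimensional and `q'` is anisotropic), and complete the square:
`q (v', v'') = q' (v' + L v'') + q'' v''` restricts to `q'`, has cross pairing `B`, and its
minimum over the fibre of `v''` is `q'' v''`, attained at `v' = -L v''`.
-/

open QuadraticMap

theorem ciInf_add_const {α : Type*} {ι : Sort*} [Nonempty ι] [ConditionallyCompleteLattice α]
    [AddGroup α] [AddRightMono α] {f : ι → α} (hf : BddBelow (Set.range f)) (c : α) :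
    ⨅ i, (f i + c) = (⨅ i, f i) + c :=
  ((OrderIso.addRight c).map_ciInf hf).symm

theorem eq_of_eq_add_of_iInf_eq {α β : Type*} [Nonempty α] {f g : α → β → ℝ} (c : β → ℝ)
    (hfg : ∀ x y, f x y = g x y + c y) (hg : ∀ y, BddBelow (Set.range (g · y)))
    (hinf : ∀ y, ⨅ x, f x y = ⨅ x, g x y) : f = g := by
  have hc : ∀ y, c y = 0 := fun y => by
    have h := hinf y
    simp only [hfg, ciInf_add_const (hg y)] at h
    linarith
  funext x y
  rw [hfg, hc, add_zero]

theorem QuadraticMap.Anisotropic.exists_associated_comp_eq {K V W : Type*} [Field K]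
    [Invertible (2 : K)] [AddCommGroup V] [Module K V] [FiniteDimensional K V] [AddCommGroup W]
    [Module K W] {Q : QuadraticForm K V} (hQ : Q.Anisotropic) (B : W →ₗ[K] V →ₗ[K] K) :
    ∃ L : W →ₗ[K] V, associated Q ∘ₗ L = B := by
  have hnd : (associated Q).Nondegenerate :=
    (LinearMap.IsRefl.nondegenerate_iff_separatingLeft
      (QuadraticForm.associated_isSymm K Q).isRefl).2 (separatingLeft_of_anisotropic Q hQ)
  refine ⟨(LinearMap.BilinForm.toDual _ hnd).symm.toLinearMap ∘ₗ B, ?_⟩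
  ext w v
  simp [← LinearMap.BilinForm.toDual_def hnd]

namespace QuadraticMap

theorem polar_div_two_eq_associated {K V : Type*} [Field K] [Invertible (2 : K)] [AddCommGroup V]
    [Module K V] (Q : QuadraticForm K V) (x y : V) : polar Q x y / 2 = associated Q x y := by
  have h := LinearMap.congr_fun₂ (two_nsmul_associated K Q) x y
  simp only [polarBilin_apply_apply, two_smul, LinearMap.add_apply] at h
  rw [← h, add_self_div_two]

section CommRing

variable {R M₁ M₂ P : Type*} [CommRing R] [AddCommGroup M₁] [Module R M₁] [AddCommGroup M₂]
  [Module R M₂] [AddCommGroup P] [Module R P]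

theorem polar_inl_inr (Q : QuadraticMap R (M₁ × M₂) P) (x : M₁) (y : M₂) :
    polar Q (x, 0) (0, y) = Q (x, y) - Q (x, 0) - Q (0, y) := by
  simp [polar]

def prodShear (Q₁ : QuadraticMap R M₁ P) (Q₂ : QuadraticMap R M₂ P) (L : M₂ →ₗ[R] M₁) :
    QuadraticMap R (M₁ × M₂) P :=
  Q₁.comp (LinearMap.fst R M₁ M₂ + L ∘ₗ LinearMap.snd R M₁ M₂) + Q₂.comp (LinearMap.snd R M₁ M₂)

variable {Q₁ : QuadraticMap R M₁ P} {Q₂ : QuadraticMap R M₂ P} {L : M₂ →ₗ[R] M₁}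

@[simp]
theorem prodShear_apply (x : M₁) (y : M₂) : prodShear Q₁ Q₂ L (x, y) = Q₁ (x + L y) + Q₂ y :=
  rfl

theorem polar_prodShear_inl_inr (x : M₁) (y : M₂) :
    polar (prodShear Q₁ Q₂ L) (x, 0) (0, y) = polar Q₁ x (L y) := by
  simp only [polar, Prod.mk_add_mk, prodShear_apply, add_zero, zero_add, map_zero]
  abel

theorem PosDef.prodShear [PartialOrder P] [AddLeftMono P] (h₁ : Q₁.PosDef) (h₂ : Q₂.PosDef) :
    (prodShear Q₁ Q₂ L).PosDef := by
  rintro ⟨x, y⟩ hxy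
  refine (h₁.prod h₂) (x + L y, y) fun h => hxy ?_
  obtain ⟨hx, rfl⟩ := Prod.mk_eq_zero.1 h
  simp_all

end CommRing

theorem iInf_prodShear {V₁ V₂ : Type*} [AddCommGroup V₁] [Module ℝ V₁] [AddCommGroup V₂]
    [Module ℝ V₂] {Q₁ : QuadraticForm ℝ V₁} (h₁ : ∀ x, 0 ≤ Q₁ x) (Q₂ : QuadraticForm ℝ V₂)
    (L : V₂ →ₗ[ℝ] V₁) (y : V₂) :
    ⨅ x, prodShear Q₁ Q₂ L (x, y) = Q₂ y := by
  refine IsLeast.csInf_eq ⟨⟨-L y, by simp⟩, ?_⟩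
  rintro _ ⟨x, rfl⟩
  simpa using h₁ (x + L y)

end QuadraticMap

theorem extensions_biject_with_pairings_general
    (V' V'' : Type*) [AddCommGroup V'] [Module ℝ V'] [FiniteDimensional ℝ V']
    [AddCommGroup V''] [Module ℝ V'']
    (q' : QuadraticForm ℝ V') (hq' : q'.PosDef)
    (q'' : QuadraticForm ℝ V'') (hq'' : q''.PosDef) :
    Set.BijOn
      (fun q : QuadraticForm ℝ (V' × V'') =>
        fun (v' : V') (v'' : V'') => (q (v', v'') - q (v', 0) - q (0, v'')) / 2)
      {q : QuadraticForm ℝ (V' × V'') | q.PosDef ∧ (∀ v' : V', q (v', 0) = q' v') ∧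
        ∀ v'' : V'', sInf (Set.range fun v' : V' => q (v', v'')) = q'' v''}
      {f : V' → V'' → ℝ | ∃ B : V' →ₗ[ℝ] V'' →ₗ[ℝ] ℝ, f = fun v' v'' => B v' v''} := by
  refine ⟨fun q _ => ?_, ?_, ?_⟩
  · refine ⟨(associated q).compl₁₂ (LinearMap.inl ℝ V' V'') (LinearMap.inr ℝ V' V''), ?_⟩
    funext v' v''
    dsimp only
    rw [← polar_inl_inr, polar_div_two_eq_associated]
    rfl
  · rintro q₁ ⟨-, hres₁, hinf₁⟩ q₂ ⟨hpd₂, hres₂, hinf₂⟩ hpair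
    have hq : (fun x y => q₁ (x, y)) = fun x y => q₂ (x, y) := by
      refine eq_of_eq_add_of_iInf_eq (fun y => q₁ (0, y) - q₂ (0, y)) (fun x y => ?_)
        (fun y => ⟨0, Set.forall_mem_range.2 fun x => hpd₂.nonneg _⟩)
        fun y => (hinf₁ y).trans (hinf₂ y).symm
      have h := congrFun₂ hpair x y
      simp only [hres₁, hres₂] at h
      linarith
    exact QuadraticMap.ext fun ⟨x, y⟩ => congrFun₂ hq x y
  · rintro _ ⟨B, rfl⟩
    obtain ⟨L, hL⟩ := hq'.anisotropic.exists_associated_comp_eq B.flip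
    refine ⟨prodShear q' q'' L, ⟨hq'.prodShear hq'', fun v' => by simp,
      iInf_prodShear hq'.nonneg q'' L⟩, ?_⟩
    funext v' v''
    dsimp only
    rw [← polar_inl_inr, polar_prodShear_inl_inr, polar_div_two_eq_associated, associated_isSymm,
      ← LinearMap.comp_apply, hL, LinearMap.flip_apply]

/-- Let `V = V' ⊕ V''` with positive definite forms `q'` on `V'` and `q''` on `V''`.
The map sending a positive definite quadratic form `q` on `V' × V''` with
`q|_{V'} = q'` and pushforward `j_*q = q''` along the projection `j` (defined by
`(j_*q)(v'') = inf_{v'} q(v', v'')`) to the induced bilinear pairing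
`(v', v'') ↦ B(v', v'')` is a bijection onto `Hom(V' ⊗ V'', ℝ)`, i.e. onto the
set of bilinear pairings. -/
theorem extensions_biject_with_pairings
    (V' V'' : Type*) [AddCommGroup V'] [Module ℝ V'] [FiniteDimensional ℝ V']
    [AddCommGroup V''] [Module ℝ V''] [FiniteDimensional ℝ V'']
    (q' : QuadraticForm ℝ V') (hq' : q'.PosDef)
    (q'' : QuadraticForm ℝ V'') (hq'' : q''.PosDef) :
    Set.BijOn
      (fun q : QuadraticForm ℝ (V' × V'') =>
        fun (v' : V') (v'' : V'') => (q (v', v'') - q (v', 0) - q (0, v'')) / 2)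
      {q : QuadraticForm ℝ (V' × V'') | q.PosDef ∧ (∀ v' : V', q (v', 0) = q' v') ∧
        ∀ v'' : V'', sInf (Set.range fun v' : V' => q (v', v'')) = q'' v''}
      {f : V' → V'' → ℝ | ∃ B : V' →ₗ[ℝ] V'' →ₗ[ℝ] ℝ, f = fun v' v'' => B v' v''} :=
  extensions_biject_with_pairings_general V' V'' q' hq' q'' hq''
end

section
/- Let λ be a function ℂ → ℂ (meromorphic, with at most a simple pole at 0 and no other poles). Define on ⨁_n Sym-functions the symmetric shuffle product: (F ⋆ F')(s₁,…,s_{m+n}) = Σ over (m,n)-shuffles w of w(F(s₁,…,s_m) F'(s_{m+1},…,s_{m+n}) ∏_{1≤i≤m < j≤m+n} λ(s_i − s_j)). Then ⋆ is associative: (F ⋆ G) ⋆ H = F ⋆ (G ⋆ H) for symmetric meromorphic functions F, G, H. -/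
open Finset in
/-- The symmetric shuffle product of `F : (Fin m → ℂ) → ℂ` and `G : (Fin n → ℂ) → ℂ`
with respect to `lam`:
`(F ⋆ G)(s₁,…,s_{m+n}) = Σ_w w(F(s₁,…,s_m) G(s_{m+1},…,s_{m+n}) ∏_{i≤m<j} lam (sᵢ-sⱼ))`,
the sum being over `(m,n)`-shuffles `w`.  Equivalently (as formalized here) the sum is
over `m`-element subsets `A` of `{1,…,m+n}`: `F` is evaluated at the variables indexed
by `A` in increasing order, `G` at those of the complement in increasing order, with
factor `∏_{a ∈ A, b ∉ A} lam (s_a - s_b)`. -/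
noncomputable def shuffleMul (lam : ℂ → ℂ) {m n : ℕ}
    (F : (Fin m → ℂ) → ℂ) (G : (Fin n → ℂ) → ℂ) :
    (Fin (m + n) → ℂ) → ℂ := fun s =>
  ∑ A ∈ Finset.univ.powersetCard m,
    if h : A.card = m then
      F (fun i => s ((A.orderIsoOfFin h) i).1) *
      G (fun j => s (((Aᶜ).orderIsoOfFin
          (by rw [Finset.card_compl, h, Fintype.card_fin]; omega)) j).1) *
      ∏ a ∈ A, ∏ b ∈ Aᶜ, lam (s a - s b)
    else 0

namespace ShuffleAux
open Finset

noncomputable def ev {N q : ℕ} (s : Fin N → ℂ) (A : Finset (Fin N)) (h : A.card = q) :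
    Fin q → ℂ := fun i => s (A.orderEmbOfFin h i)

noncomputable def LL (lam : ℂ → ℂ) {N : ℕ} (s : Fin N → ℂ) (X Y : Finset (Fin N)) : ℂ :=
  ∏ a ∈ X, ∏ b ∈ Y, lam (s a - s b)

lemma ev_congr {N q : ℕ} (s : Fin N → ℂ) {A B : Finset (Fin N)} (h : A = B)
    (hA : A.card = q) (hB : B.card = q) : ev s A hA = ev s B hB := by subst h; rfl

lemma orderEmbOfFin_map {N M q : ℕ} (φ : Fin N ↪o Fin M) (A : Finset (Fin N))
    (h : A.card = q) (h' : (A.map φ.toEmbedding).card = q) (i : Fin q) :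
    (A.map φ.toEmbedding).orderEmbOfFin h' i = φ (A.orderEmbOfFin h i) := by
  have := Finset.orderEmbOfFin_unique h' (f := fun i => φ (A.orderEmbOfFin h i))
    (fun i => mem_map_of_mem _ (Finset.orderEmbOfFin_mem A h i))
    (φ.strictMono.comp (A.orderEmbOfFin h).strictMono)
  exact (congrFun this i).symm

lemma ev_map {N M q : ℕ} (φ : Fin N ↪o Fin M) (s : Fin M → ℂ) (A : Finset (Fin N))
    (h : A.card = q) (h' : (A.map φ.toEmbedding).card = q) :
    ev (fun i => s (φ i)) A h = ev s (A.map φ.toEmbedding) h' := by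
  funext i; simp [ev, orderEmbOfFin_map φ A h h' i]

lemma LL_map {N M : ℕ} (lam : ℂ → ℂ) (φ : Fin N ↪o Fin M) (s : Fin M → ℂ)
    (X Y : Finset (Fin N)) :
    LL lam (fun i => s (φ i)) X Y = LL lam s (X.map φ.toEmbedding) (Y.map φ.toEmbedding) := by
  simp [LL, Finset.prod_map]

lemma map_univ_orderEmbOfFin {α : Type*} [LinearOrder α] {k : ℕ} (D : Finset α)
    (hD : D.card = k) :
    (univ : Finset (Fin k)).map (D.orderEmbOfFin hD).toEmbedding = D := by
  ext x
  simp only [mem_map, mem_univ, true_and, RelEmbedding.coe_toEmbedding]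
  constructor
  · rintro ⟨i, rfl⟩; exact Finset.orderEmbOfFin_mem D hD i
  · intro hx
    have : x ∈ Set.range (D.orderEmbOfFin hD) := by
      rw [Finset.range_orderEmbOfFin]; exact hx
    obtain ⟨i, hi⟩ := this; exact ⟨i, hi⟩

lemma LL_union_left (lam : ℂ → ℂ) {N : ℕ} (s : Fin N → ℂ) {X Y : Finset (Fin N)}
    (Z : Finset (Fin N)) (h : Disjoint X Y) :
    LL lam s (X ∪ Y) Z = LL lam s X Z * LL lam s Y Z := Finset.prod_union h

lemma LL_union_right (lam : ℂ → ℂ) {N : ℕ} (s : Fin N → ℂ) (X : Finset (Fin N))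
    {Y Z : Finset (Fin N)} (h : Disjoint Y Z) :
    LL lam s X (Y ∪ Z) = LL lam s X Y * LL lam s X Z := by
  simp [LL, Finset.prod_union h, Finset.prod_mul_distrib]

lemma shuffleMul_apply (lam : ℂ → ℂ) {m n : ℕ} (F : (Fin m → ℂ) → ℂ) (G : (Fin n → ℂ) → ℂ)
    (s : Fin (m + n) → ℂ) :
    shuffleMul lam F G s = ∑ A ∈ Finset.univ.powersetCard m,
      if h : A.card = m then
        F (ev s A h) * G (ev s Aᶜ (by rw [Finset.card_compl, h, Fintype.card_fin]; omega)) *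
          LL lam s A Aᶜ
      else 0 := by
  unfold shuffleMul
  refine Finset.sum_congr rfl fun A hA => ?_
  have h : A.card = m := (Finset.mem_powersetCard.1 hA).2
  rw [dif_pos h, dif_pos h]
  simp only [ev, LL, Finset.coe_orderIsoOfFin_apply]
  rfl

noncomputable def T (lam : ℂ → ℂ) {m n p : ℕ} (F : (Fin m → ℂ) → ℂ)
    (G : (Fin n → ℂ) → ℂ) (H : (Fin p → ℂ) → ℂ) (s : Fin (m + n + p) → ℂ)
    (A B : Finset (Fin (m + n + p))) : ℂ :=
  if hA : A.card = m then if hB : B.card = n then if hC : ((A ∪ B)ᶜ).card = p then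
    F (ev s A hA) * G (ev s B hB) * H (ev s (A ∪ B)ᶜ hC) *
      (LL lam s A B * (LL lam s A (A ∪ B)ᶜ * LL lam s B (A ∪ B)ᶜ))
  else 0 else 0 else 0

variable (lam : ℂ → ℂ) {m n p : ℕ} (F : (Fin m → ℂ) → ℂ)
  (G : (Fin n → ℂ) → ℂ) (H : (Fin p → ℂ) → ℂ)

lemma left_eq (s : Fin (m + n + p) → ℂ) :
    shuffleMul lam (shuffleMul lam F G) H s
      = ∑ D ∈ (univ : Finset (Fin (m + n + p))).powersetCard (m + n),
          ∑ E ∈ (univ : Finset (Fin (m + n))).powersetCard m,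
            if hD : D.card = m + n then
              T lam F G H s (E.map (D.orderEmbOfFin hD).toEmbedding)
                (Eᶜ.map (D.orderEmbOfFin hD).toEmbedding)
            else 0 := by
  rw [shuffleMul_apply]
  refine Finset.sum_congr rfl fun D hDmem => ?_
  have hD : D.card = m + n := (Finset.mem_powersetCard.1 hDmem).2
  rw [dif_pos hD, shuffleMul_apply, Finset.sum_mul, Finset.sum_mul]
  refine Finset.sum_congr rfl fun E hEmem => ?_
  have hE : E.card = m := (Finset.mem_powersetCard.1 hEmem).2
  rw [dif_pos hE, dif_pos hD]
  set φ := D.orderEmbOfFin hD with hφ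
  have hA : (E.map φ.toEmbedding).card = m := by simp [hE]
  have hEc : (Eᶜ : Finset (Fin (m + n))).card = n := by
    rw [card_compl, hE, Fintype.card_fin]; omega
  have hB : (Eᶜ.map φ.toEmbedding).card = n := by simp [hEc]
  have hunion : E.map φ.toEmbedding ∪ Eᶜ.map φ.toEmbedding = D := by
    rw [← Finset.map_union, union_compl, map_univ_orderEmbOfFin]
  have hDc : (Dᶜ : Finset (Fin (m + n + p))).card = p := by
    rw [card_compl, hD, Fintype.card_fin]; omega
  have hC : ((E.map φ.toEmbedding ∪ Eᶜ.map φ.toEmbedding)ᶜ).card = p := by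
    rw [hunion]; exact hDc
  unfold T
  rw [dif_pos hA, dif_pos hB, dif_pos hC]
  have hdisj : Disjoint (E.map φ.toEmbedding) (Eᶜ.map φ.toEmbedding) :=
    (Finset.disjoint_map _).2 disjoint_compl_right
  have e1 : ev (ev s D hD) E hE = ev s (E.map φ.toEmbedding) hA := ev_map φ s E hE hA
  have e2 : ev (ev s D hD) Eᶜ hEc = ev s (Eᶜ.map φ.toEmbedding) hB := ev_map φ s Eᶜ hEc hB
  have e3 : LL lam (ev s D hD) E Eᶜ
      = LL lam s (E.map φ.toEmbedding) (Eᶜ.map φ.toEmbedding) := LL_map lam φ s E Eᶜ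
  have e4 : ev s (E.map φ.toEmbedding ∪ Eᶜ.map φ.toEmbedding)ᶜ hC = ev s Dᶜ hDc :=
    ev_congr s (by rw [hunion]) hC hDc
  have e5 : LL lam s D Dᶜ
      = LL lam s (E.map φ.toEmbedding) Dᶜ * LL lam s (Eᶜ.map φ.toEmbedding) Dᶜ := by
    rw [← hunion]; exact LL_union_left lam s _ hdisj
  rw [e1, e2, e3, e4, e5]
  have e6 : (E.map φ.toEmbedding ∪ Eᶜ.map φ.toEmbedding)ᶜ = Dᶜ := by rw [hunion]
  rw [e6]
  ring

end ShuffleAux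

namespace ShuffleAux2
open Finset ShuffleAux

lemma mem_map_orderEmb {α : Type*} [LinearOrder α] {k : ℕ} (φ : Fin k ↪o α)
    {e : Fin k} {X : Finset (Fin k)} : φ e ∈ X.map φ.toEmbedding ↔ e ∈ X := by
  constructor
  · intro h
    obtain ⟨a, ha, hax⟩ := Finset.mem_map.1 h
    rwa [← φ.injective hax]
  · exact fun h => Finset.mem_map_of_mem _ h

lemma filter_map_eq {α : Type*} [LinearOrder α] {k : ℕ} (D : Finset α) (hD : D.card = k)
    {A : Finset α} (hA : A ⊆ D) (pred : Fin k → Prop) [DecidablePred pred]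
    (hpred : ∀ e, pred e ↔ D.orderEmbOfFin hD e ∈ A) :
    ((univ : Finset (Fin k)).filter pred).map (D.orderEmbOfFin hD).toEmbedding = A := by
  ext x
  simp only [Finset.mem_map, Finset.mem_filter, Finset.mem_univ, true_and,
    RelEmbedding.coe_toEmbedding]
  constructor
  · rintro ⟨i, hi, rfl⟩; exact (hpred i).1 hi
  · intro hx
    have : x ∈ Set.range (D.orderEmbOfFin hD) := by
      rw [Finset.range_orderEmbOfFin]; exact hA hx
    obtain ⟨i, hi⟩ := this
    exact ⟨i, (hpred i).2 (by rwa [hi]), hi⟩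

end ShuffleAux2

namespace ShuffleAux
open Finset ShuffleAux2

def P (m n p : ℕ) : Finset (Finset (Fin (m + n + p)) × Finset (Fin (m + n + p))) :=
  ((Finset.univ.powersetCard m) ×ˢ (Finset.univ.powersetCard n)).filter
    fun q => Disjoint q.1 q.2

lemma mem_P {m n p : ℕ} {q : Finset (Fin (m + n + p)) × Finset (Fin (m + n + p))} :
    q ∈ P m n p ↔ q.1.card = m ∧ q.2.card = n ∧ Disjoint q.1 q.2 := by
  simp [P, Finset.mem_filter, Finset.mem_product, Finset.mem_powersetCard, and_assoc]

variable (lam : ℂ → ℂ) {m n p : ℕ} (F : (Fin m → ℂ) → ℂ)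
  (G : (Fin n → ℂ) → ℂ) (H : (Fin p → ℂ) → ℂ)

lemma left_sum (s : Fin (m + n + p) → ℂ) :
    shuffleMul lam (shuffleMul lam F G) H s = ∑ q ∈ P m n p, T lam F G H s q.1 q.2 := by
  rw [left_eq lam F G H s, ← Finset.sum_product']
  refine Finset.sum_nbij' (i := fun x : Finset (Fin (m + n + p)) × Finset (Fin (m + n)) =>
      if hD : x.1.card = m + n then
        (x.2.map (x.1.orderEmbOfFin hD).toEmbedding,
         x.2ᶜ.map (x.1.orderEmbOfFin hD).toEmbedding)
      else (∅, ∅))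
    (j := fun q => if hU : (q.1 ∪ q.2).card = m + n then
        (q.1 ∪ q.2, (univ : Finset (Fin (m + n))).filter
          fun e => (q.1 ∪ q.2).orderEmbOfFin hU e ∈ q.1)
      else (∅, ∅)) ?_ ?_ ?_ ?_ ?_
  · rintro ⟨D, E⟩ hmem
    dsimp only
    rw [Finset.mem_product, Finset.mem_powersetCard, Finset.mem_powersetCard] at hmem
    have hD : D.card = m + n := hmem.1.2
    have hE : E.card = m := hmem.2.2
    rw [dif_pos hD]
    refine mem_P.2 ⟨by simp [hE], ?_, (Finset.disjoint_map _).2 disjoint_compl_right⟩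
    rw [Finset.card_map, Finset.card_compl, hE, Fintype.card_fin]; omega
  · rintro ⟨A, B⟩ hq
    dsimp only
    obtain ⟨hA, hB, hd⟩ := mem_P.1 hq
    have hU : (A ∪ B).card = m + n := by rw [Finset.card_union_of_disjoint hd, hA, hB]
    rw [dif_pos hU, Finset.mem_product, Finset.mem_powersetCard, Finset.mem_powersetCard]
    refine ⟨⟨Finset.subset_univ _, hU⟩, Finset.subset_univ _, ?_⟩
    have := filter_map_eq (A ∪ B) hU (Finset.subset_union_left (s₁ := A) (s₂ := B))
      _ (fun e => Iff.rfl)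
    calc ((univ : Finset (Fin (m + n))).filter
          fun e => (A ∪ B).orderEmbOfFin hU e ∈ A).card
        = (((univ : Finset (Fin (m + n))).filter
          fun e => (A ∪ B).orderEmbOfFin hU e ∈ A).map ((A ∪ B).orderEmbOfFin hU).toEmbedding).card := (Finset.card_map _).symm
      _ = A.card := by rw [this]
      _ = m := hA
  · rintro ⟨D, E⟩ hmem
    dsimp only
    rw [Finset.mem_product, Finset.mem_powersetCard, Finset.mem_powersetCard] at hmem
    have hD : D.card = m + n := hmem.1.2
    rw [dif_pos hD]
    have hunion : E.map (D.orderEmbOfFin hD).toEmbedding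
        ∪ Eᶜ.map (D.orderEmbOfFin hD).toEmbedding = D := by
      rw [← Finset.map_union, union_compl, map_univ_orderEmbOfFin]
    rw [hunion, dif_pos hD]
    refine Prod.ext rfl ?_
    show (univ.filter fun e => D.orderEmbOfFin hD e
        ∈ E.map (D.orderEmbOfFin hD).toEmbedding) = E
    ext e
    simp only [Finset.mem_filter, Finset.mem_univ, true_and]
    exact mem_map_orderEmb (D.orderEmbOfFin hD)
  · rintro ⟨A, B⟩ hq
    dsimp only
    obtain ⟨hA, hB, hd⟩ := mem_P.1 hq
    have hU : (A ∪ B).card = m + n := by rw [Finset.card_union_of_disjoint hd, hA, hB]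
    rw [dif_pos hU, dif_pos hU]
    set φ := (A ∪ B).orderEmbOfFin hU with hφ
    have h1 : ((univ : Finset (Fin (m + n))).filter fun e => φ e ∈ A).map φ.toEmbedding = A :=
      filter_map_eq (A ∪ B) hU Finset.subset_union_left _ (fun e => Iff.rfl)
    have hcompl : ((univ : Finset (Fin (m + n))).filter fun e => φ e ∈ A)ᶜ
        = (univ : Finset (Fin (m + n))).filter fun e => φ e ∈ B := by
      ext e
      simp only [Finset.mem_compl, Finset.mem_filter, Finset.mem_univ, true_and]
      have hmem : φ e ∈ A ∪ B := Finset.orderEmbOfFin_mem _ hU e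
      rw [Finset.mem_union] at hmem
      constructor
      · intro h; tauto
      · intro h hA2; exact (Finset.disjoint_left.1 hd hA2) h
    have h2 : (((univ : Finset (Fin (m + n))).filter fun e => φ e ∈ A)ᶜ).map φ.toEmbedding = B := by
      rw [hcompl]; exact filter_map_eq (A ∪ B) hU Finset.subset_union_right _ (fun e => Iff.rfl)
    exact Prod.ext h1 h2
  · rintro ⟨D, E⟩ hmem
    dsimp only
    rw [Finset.mem_product, Finset.mem_powersetCard, Finset.mem_powersetCard] at hmem
    have hD : D.card = m + n := hmem.1.2
    rw [dif_pos hD, dif_pos hD]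
end ShuffleAux

namespace ShuffleAux
open Finset ShuffleAux2

lemma map_compl_surj {N M : ℕ} (f : Fin N ↪ Fin M) (hf : Function.Surjective f)
    (X : Finset (Fin N)) : Xᶜ.map f = (X.map f)ᶜ := by
  ext x
  obtain ⟨y, rfl⟩ := hf x
  simp [Finset.mem_map', Finset.mem_compl]

section Right

variable (lam : ℂ → ℂ) {m n p : ℕ} (F : (Fin m → ℂ) → ℂ)
  (G : (Fin n → ℂ) → ℂ) (H : (Fin p → ℂ) → ℂ) (h3 : m + (n + p) = m + n + p)

lemma cast_surj : Function.Surjective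
    ((Fin.castOrderIso h3).toOrderEmbedding.toEmbedding : Fin (m + (n + p)) ↪ Fin (m + n + p)) :=
  fun x => ⟨(Fin.castOrderIso h3).symm x, by apply Fin.ext; simp⟩

lemma cast_surj' : Function.Surjective
    ((Fin.castOrderIso h3.symm).toOrderEmbedding.toEmbedding :
      Fin (m + n + p) ↪ Fin (m + (n + p))) :=
  fun x => ⟨(Fin.castOrderIso h3) x, by apply Fin.ext; simp⟩

lemma map_c'c (X : Finset (Fin (m + (n + p)))) :
    (X.map (Fin.castOrderIso h3).toOrderEmbedding.toEmbedding).map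
      (Fin.castOrderIso h3.symm).toOrderEmbedding.toEmbedding = X := by
  rw [Finset.map_map]
  ext x
  simp only [Finset.mem_map, Function.Embedding.trans_apply]
  constructor
  · rintro ⟨a, ha, hax⟩
    have : a = x := by
      have := hax
      apply Fin.ext
      have h1 : ((Fin.castOrderIso h3.symm).toOrderEmbedding.toEmbedding
          ((Fin.castOrderIso h3).toOrderEmbedding.toEmbedding a) : Fin (m + (n + p))).val
          = (a : ℕ) := by simp
      rw [hax] at h1
      exact h1.symm
    rwa [← this]
  · intro hx
    exact ⟨x, hx, by apply Fin.ext; simp⟩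

lemma map_cc' (X : Finset (Fin (m + n + p))) :
    (X.map (Fin.castOrderIso h3.symm).toOrderEmbedding.toEmbedding).map
      (Fin.castOrderIso h3).toOrderEmbedding.toEmbedding = X := by
  rw [Finset.map_map]
  ext x
  simp only [Finset.mem_map, Function.Embedding.trans_apply]
  constructor
  · rintro ⟨a, ha, hax⟩
    have : a = x := by
      apply Fin.ext
      have h1 : ((Fin.castOrderIso h3).toOrderEmbedding.toEmbedding
          ((Fin.castOrderIso h3.symm).toOrderEmbedding.toEmbedding a) : Fin (m + n + p)).val
          = (a : ℕ) := by simp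
      rw [hax] at h1
      exact h1.symm
    rwa [← this]
  · intro hx
    exact ⟨x, hx, by apply Fin.ext; simp⟩

lemma right_eq (s : Fin (m + n + p) → ℂ) :
    shuffleMul lam F (shuffleMul lam G H) (fun i => s (Fin.cast h3 i))
      = ∑ A' ∈ (univ : Finset (Fin (m + (n + p)))).powersetCard m,
          ∑ E ∈ (univ : Finset (Fin (n + p))).powersetCard n,
            if hA' : A'.card = m then
              T lam F G H s (A'.map (Fin.castOrderIso h3).toOrderEmbedding.toEmbedding)
                (E.map (((A'ᶜ).orderEmbOfFin
                    (by rw [Finset.card_compl, hA', Fintype.card_fin]; omega)).trans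
                  (Fin.castOrderIso h3).toOrderEmbedding).toEmbedding)
            else 0 := by
  rw [shuffleMul_apply]
  refine Finset.sum_congr rfl fun A' hA'mem => ?_
  have hA' : A'.card = m := (Finset.mem_powersetCard.1 hA'mem).2
  rw [dif_pos hA']
  have hcc : (A'ᶜ : Finset (Fin (m + (n + p)))).card = n + p := by
    rw [Finset.card_compl, hA', Fintype.card_fin]; omega
  rw [shuffleMul_apply, Finset.mul_sum, Finset.sum_mul]
  refine Finset.sum_congr rfl fun E hEmem => ?_
  have hE : E.card = n := (Finset.mem_powersetCard.1 hEmem).2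
  rw [dif_pos hE, dif_pos hA']
  set c := (Fin.castOrderIso h3).toOrderEmbedding with hcdef
  set ψ := (A'ᶜ).orderEmbOfFin hcc with hψdef
  have hA : (A'.map c.toEmbedding).card = m := by simp [hA']
  have hB : (E.map (ψ.trans c).toEmbedding).card = n := by simp [hE]
  have hEc : (Eᶜ : Finset (Fin (n + p))).card = p := by
    rw [Finset.card_compl, hE, Fintype.card_fin]; omega
  have hC2 : (Eᶜ.map (ψ.trans c).toEmbedding).card = p := by simp [hEc]
  have hAc : (A'ᶜ).map c.toEmbedding = (A'.map c.toEmbedding)ᶜ :=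
    map_compl_surj c.toEmbedding (cast_surj h3) A'
  have huniv : (univ : Finset (Fin (n + p))).map (ψ.trans c).toEmbedding
      = (A'.map c.toEmbedding)ᶜ := by
    have h0 : (univ : Finset (Fin (n + p))).map (ψ.trans c).toEmbedding
        = ((univ : Finset (Fin (n + p))).map ψ.toEmbedding).map c.toEmbedding :=
      (Finset.map_map _ _ _).symm
    rw [h0, map_univ_orderEmbOfFin, hAc]
  have hBC : E.map (ψ.trans c).toEmbedding ∪ Eᶜ.map (ψ.trans c).toEmbedding
      = (A'.map c.toEmbedding)ᶜ := by
    rw [← Finset.map_union, union_compl, huniv]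
  have hdBC : Disjoint (E.map (ψ.trans c).toEmbedding) (Eᶜ.map (ψ.trans c).toEmbedding) :=
    (Finset.disjoint_map _).2 disjoint_compl_right
  have hBsub : E.map (ψ.trans c).toEmbedding ⊆ (A'.map c.toEmbedding)ᶜ :=
    hBC ▸ Finset.subset_union_left
  have hC2sub : Eᶜ.map (ψ.trans c).toEmbedding ⊆ (A'.map c.toEmbedding)ᶜ :=
    hBC ▸ Finset.subset_union_right
  have hdAB : Disjoint (A'.map c.toEmbedding) (E.map (ψ.trans c).toEmbedding) :=
    Finset.disjoint_left.2 fun x hx hx' => (Finset.mem_compl.1 (hBsub hx')) hx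
  have hC' : ((A'.map c.toEmbedding ∪ E.map (ψ.trans c).toEmbedding)ᶜ).card = p := by
    rw [Finset.card_compl, Finset.card_union_of_disjoint hdAB, hA, hB, Fintype.card_fin]; omega
  have hC2eq : (A'.map c.toEmbedding ∪ E.map (ψ.trans c).toEmbedding)ᶜ
      = Eᶜ.map (ψ.trans c).toEmbedding := by
    refine (Finset.eq_of_subset_of_card_le ?_ ?_).symm
    · intro x hx
      rw [Finset.mem_compl, Finset.mem_union]
      push_neg
      exact ⟨fun hxa => (Finset.mem_compl.1 (hC2sub hx)) hxa,
        fun hxb => (Finset.disjoint_left.1 hdBC hxb) hx⟩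
    · rw [hC', hC2]
  unfold T
  rw [dif_pos hA, dif_pos hB, dif_pos hC']
  have e0 : ev (fun i => s (Fin.cast h3 i)) A' hA' = ev s (A'.map c.toEmbedding) hA :=
    ev_map c s A' hA' hA
  have e1 : ev (ev (fun i => s (Fin.cast h3 i)) A'ᶜ hcc) E hE
      = ev s (E.map (ψ.trans c).toEmbedding) hB := ev_map (ψ.trans c) s E hE hB
  have e2 : ev (ev (fun i => s (Fin.cast h3 i)) A'ᶜ hcc) Eᶜ hEc
      = ev s (Eᶜ.map (ψ.trans c).toEmbedding) hC2 := ev_map (ψ.trans c) s Eᶜ hEc hC2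
  have e3 : LL lam (ev (fun i => s (Fin.cast h3 i)) A'ᶜ hcc) E Eᶜ
      = LL lam s (E.map (ψ.trans c).toEmbedding) (Eᶜ.map (ψ.trans c).toEmbedding) :=
    LL_map lam (ψ.trans c) s E Eᶜ
  have e4 : LL lam (fun i => s (Fin.cast h3 i)) A' A'ᶜ
      = LL lam s (A'.map c.toEmbedding) (A'.map c.toEmbedding)ᶜ := by
    have h5 : LL lam (fun i => s (Fin.cast h3 i)) A' A'ᶜ
        = LL lam s (A'.map c.toEmbedding) ((A'ᶜ).map c.toEmbedding) := LL_map lam c s A' A'ᶜ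
    rw [h5, hAc]
  have e5 : LL lam s (A'.map c.toEmbedding) (A'.map c.toEmbedding)ᶜ
      = LL lam s (A'.map c.toEmbedding) (E.map (ψ.trans c).toEmbedding)
        * LL lam s (A'.map c.toEmbedding) (Eᶜ.map (ψ.trans c).toEmbedding) := by
    rw [← hBC]; exact LL_union_right lam s _ hdBC
  have e6 : ev s (A'.map c.toEmbedding ∪ E.map (ψ.trans c).toEmbedding)ᶜ hC'
      = ev s (Eᶜ.map (ψ.trans c).toEmbedding) hC2 := ev_congr s hC2eq hC' hC2
  rw [e0, e1, e2, e3, e4, e5, e6, hC2eq]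
  ring

end Right
end ShuffleAux

namespace ShuffleAux
open Finset ShuffleAux2

section RightSum

variable (lam : ℂ → ℂ) {m n p : ℕ} (F : (Fin m → ℂ) → ℂ)
  (G : (Fin n → ℂ) → ℂ) (H : (Fin p → ℂ) → ℂ) (h3 : m + (n + p) = m + n + p)

lemma right_sum (s : Fin (m + n + p) → ℂ) :
    shuffleMul lam F (shuffleMul lam G H) (fun i => s (Fin.cast h3 i))
      = ∑ q ∈ P m n p, T lam F G H s q.1 q.2 := by
  rw [right_eq lam F G H h3 s, ← Finset.sum_product']
  set c := (Fin.castOrderIso h3).toOrderEmbedding with hcdef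
  set c' := (Fin.castOrderIso h3.symm).toOrderEmbedding with hc'def
  refine Finset.sum_nbij' (i := fun x : Finset (Fin (m + (n + p))) × Finset (Fin (n + p)) =>
      if hA' : x.1.card = m then
        (x.1.map c.toEmbedding,
         x.2.map (((x.1ᶜ).orderEmbOfFin
            (by rw [Finset.card_compl, hA', Fintype.card_fin]; omega)).trans c).toEmbedding)
      else (∅, ∅))
    (j := fun q =>
      if h : ((q.1.map c'.toEmbedding)ᶜ : Finset (Fin (m + (n + p)))).card = n + p then
        (q.1.map c'.toEmbedding,
         (univ : Finset (Fin (n + p))).filter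
           fun e => c (((q.1.map c'.toEmbedding)ᶜ).orderEmbOfFin h e) ∈ q.2)
      else (∅, ∅)) ?_ ?_ ?_ ?_ ?_
  · rintro ⟨A', E⟩ hmem
    dsimp only
    rw [Finset.mem_product, Finset.mem_powersetCard, Finset.mem_powersetCard] at hmem
    have hA' : A'.card = m := hmem.1.2
    have hE : E.card = n := hmem.2.2
    rw [dif_pos hA']
    have hcc : (A'ᶜ : Finset (Fin (m + (n + p)))).card = n + p := by
      rw [Finset.card_compl, hA', Fintype.card_fin]; omega
    set ψ := (A'ᶜ).orderEmbOfFin hcc with hψ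
    have hAc : (A'ᶜ).map c.toEmbedding = (A'.map c.toEmbedding)ᶜ :=
      map_compl_surj c.toEmbedding (cast_surj h3) A'
    have huniv : (univ : Finset (Fin (n + p))).map (ψ.trans c).toEmbedding
        = (A'.map c.toEmbedding)ᶜ := by
      have h0 : (univ : Finset (Fin (n + p))).map (ψ.trans c).toEmbedding
          = ((univ : Finset (Fin (n + p))).map ψ.toEmbedding).map c.toEmbedding :=
        (Finset.map_map _ _ _).symm
      rw [h0, map_univ_orderEmbOfFin, hAc]
    have hBsub : E.map (ψ.trans c).toEmbedding ⊆ (A'.map c.toEmbedding)ᶜ := by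
      rw [← huniv]; exact Finset.map_subset_map.2 (Finset.subset_univ E)
    refine mem_P.2 ⟨by simp [hA'], by simp [hE], ?_⟩
    exact Finset.disjoint_left.2 fun x hx hx' => (Finset.mem_compl.1 (hBsub hx')) hx
  · rintro ⟨A, B⟩ hq
    dsimp only
    obtain ⟨hA, hB, hd⟩ := mem_P.1 hq
    have hA' : (A.map c'.toEmbedding).card = m := by simp [hA]
    have h : ((A.map c'.toEmbedding)ᶜ : Finset (Fin (m + (n + p)))).card = n + p := by
      rw [Finset.card_compl, hA', Fintype.card_fin]; omega
    rw [dif_pos h]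
    rw [Finset.mem_product, Finset.mem_powersetCard, Finset.mem_powersetCard]
    refine ⟨⟨Finset.subset_univ _, hA'⟩, Finset.subset_univ _, ?_⟩
    set ψ' := ((A.map c'.toEmbedding)ᶜ).orderEmbOfFin h with hψ'
    have hBsub' : B.map c'.toEmbedding ⊆ (A.map c'.toEmbedding)ᶜ := by
      intro x hx
      obtain ⟨b, hb, rfl⟩ := Finset.mem_map.1 hx
      rw [Finset.mem_compl]
      intro hmem2
      obtain ⟨a, ha, hab⟩ := Finset.mem_map.1 hmem2
      have : a = b := c'.injective hab
      subst this
      exact (Finset.disjoint_left.1 hd ha) hb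
    have key := filter_map_eq ((A.map c'.toEmbedding)ᶜ) h hBsub'
      (fun e => c (ψ' e) ∈ B) (fun e => ?_)
    · calc ((univ : Finset (Fin (n + p))).filter fun e => c (ψ' e) ∈ B).card
          = (((univ : Finset (Fin (n + p))).filter fun e => c (ψ' e) ∈ B).map
              ψ'.toEmbedding).card := (Finset.card_map _).symm
        _ = (B.map c'.toEmbedding).card := by rw [key]
        _ = n := by simp [hB]
    · constructor
      · intro hc2
        exact Finset.mem_map.2 ⟨c (ψ' e), hc2, by apply Fin.ext; rfl⟩
      · intro hc2
        obtain ⟨b, hb, hbe⟩ := Finset.mem_map.1 hc2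
        have : c (ψ' e) = b := by
          rw [← hbe]; apply Fin.ext; rfl
        rwa [this]
  · rintro ⟨A', E⟩ hmem
    dsimp only
    rw [Finset.mem_product, Finset.mem_powersetCard, Finset.mem_powersetCard] at hmem
    have hA' : A'.card = m := hmem.1.2
    rw [dif_pos hA']
    have hcc : (A'ᶜ : Finset (Fin (m + (n + p)))).card = n + p := by
      rw [Finset.card_compl, hA', Fintype.card_fin]; omega
    rw [map_c'c h3 A', dif_pos hcc]
    refine Prod.ext rfl ?_
    show ((univ : Finset (Fin (n + p))).filter
        fun e => c ((A'ᶜ).orderEmbOfFin hcc e)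
          ∈ E.map (((A'ᶜ).orderEmbOfFin hcc).trans c).toEmbedding) = E
    ext e
    simp only [Finset.mem_filter, Finset.mem_univ, true_and]
    exact mem_map_orderEmb (((A'ᶜ).orderEmbOfFin hcc).trans c)
  · rintro ⟨A, B⟩ hq
    dsimp only
    obtain ⟨hA, hB, hd⟩ := mem_P.1 hq
    have hA' : (A.map c'.toEmbedding).card = m := by simp [hA]
    have h : ((A.map c'.toEmbedding)ᶜ : Finset (Fin (m + (n + p)))).card = n + p := by
      rw [Finset.card_compl, hA', Fintype.card_fin]; omega
    rw [dif_pos h, dif_pos hA']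
    set ψ' := ((A.map c'.toEmbedding)ᶜ).orderEmbOfFin h with hψ'
    have hBsub' : B.map c'.toEmbedding ⊆ (A.map c'.toEmbedding)ᶜ := by
      intro x hx
      obtain ⟨b, hb, rfl⟩ := Finset.mem_map.1 hx
      rw [Finset.mem_compl]
      intro hmem2
      obtain ⟨a, ha, hab⟩ := Finset.mem_map.1 hmem2
      have : a = b := c'.injective hab
      subst this
      exact (Finset.disjoint_left.1 hd ha) hb
    have key : (((univ : Finset (Fin (n + p))).filter fun e => c (ψ' e) ∈ B).map
        ψ'.toEmbedding) = B.map c'.toEmbedding := by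
      refine filter_map_eq ((A.map c'.toEmbedding)ᶜ) h hBsub' _ (fun e => ?_)
      constructor
      · intro hc2
        exact Finset.mem_map.2 ⟨c (ψ' e), hc2, by apply Fin.ext; rfl⟩
      · intro hc2
        obtain ⟨b, hb, hbe⟩ := Finset.mem_map.1 hc2
        have : c (ψ' e) = b := by
          rw [← hbe]; apply Fin.ext; rfl
        rwa [this]
    refine Prod.ext (map_cc' h3 A) ?_
    show (((univ : Finset (Fin (n + p))).filter fun e => c (ψ' e) ∈ B).map
        (ψ'.trans c).toEmbedding) = B
    have hmm : (((univ : Finset (Fin (n + p))).filter fun e => c (ψ' e) ∈ B).map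
        (ψ'.trans c).toEmbedding)
        = ((((univ : Finset (Fin (n + p))).filter fun e => c (ψ' e) ∈ B).map
            ψ'.toEmbedding).map c.toEmbedding) := (Finset.map_map _ _ _).symm
    rw [hmm, key, map_cc' h3 B]
  · rintro ⟨A', E⟩ hmem
    dsimp only
    rw [Finset.mem_product, Finset.mem_powersetCard, Finset.mem_powersetCard] at hmem
    have hA' : A'.card = m := hmem.1.2
    rw [dif_pos hA', dif_pos hA']

end RightSum
end ShuffleAux


/-- Associativity of the symmetric shuffle product:
`(F ⋆ G) ⋆ H = F ⋆ (G ⋆ H)` for symmetric functions `F, G, H`. -/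
theorem shuffleMul_assoc (lam : ℂ → ℂ) (m n p : ℕ)
    (F : (Fin m → ℂ) → ℂ) (G : (Fin n → ℂ) → ℂ) (H : (Fin p → ℂ) → ℂ)
    (hF : ∀ (w : Equiv.Perm (Fin m)) (s : Fin m → ℂ), F (s ∘ w) = F s)
    (hG : ∀ (w : Equiv.Perm (Fin n)) (s : Fin n → ℂ), G (s ∘ w) = G s)
    (hH : ∀ (w : Equiv.Perm (Fin p)) (s : Fin p → ℂ), H (s ∘ w) = H s) :
    ∀ s : Fin (m + n + p) → ℂ,
      shuffleMul lam (shuffleMul lam F G) H s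
        = shuffleMul lam F (shuffleMul lam G H)
            (fun i => s (Fin.cast (by omega : m + (n + p) = m + n + p) i)) := by
  intro s
  exact (ShuffleAux.left_sum lam F G H s).trans
    (ShuffleAux.right_sum lam F G H (by omega) s).symm
end

section
/- Faces of the permutohedron P_n correspond to ordered partitions (I₁,…,I_p) of {1,…,n} into nonempty disjoint subsets, the face [I₁,…,I_p] having dimension n − p; the face [J₁,…,J_q] is a subface of [I₁,…,I_p] if and only if (J₁,…,J_q) refines (I₁,…,I_p), meaning the sequence J is obtained by replacing each I_ν by an ordered partition of I_ν. -/
/-- An ordered partition of `{1,…,n}`: a sequence `(I₁,…,I_p)` of nonempty pairwise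
disjoint subsets whose union is everything. -/
structure OrderedPartition (n : ℕ) where
  len : ℕ
  blocks : Fin len → Finset (Fin n)
  blocks_nonempty : ∀ i, (blocks i).Nonempty
  blocks_disjoint : ∀ i j, i ≠ j → Disjoint (blocks i) (blocks j)
  blocks_cover : ∀ x : Fin n, ∃ i, x ∈ blocks i

/-- `(J₁,…,J_q)` refines `(I₁,…,I_p)` if it is obtained by replacing each `I_ν`
by an ordered partition of `I_ν` (concatenated in order). -/
def OrderedPartition.Refines {n : ℕ} (Q P : OrderedPartition n) : Prop :=
  ∃ φ : Fin Q.len → Fin P.len, Monotone φ ∧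
    ∀ ν : Fin P.len,
      P.blocks ν = (Finset.univ.filter fun μ => φ μ = ν).biUnion Q.blocks

/-- The permutohedron `P_n`: the convex hull in `ℝⁿ` of the `n!` points obtained by
permuting the coordinates of `(1, 2, …, n)`. -/
noncomputable def permutohedron (n : ℕ) : Set (Fin n → ℝ) :=
  convexHull ℝ {x : Fin n → ℝ | ∃ σ : Equiv.Perm (Fin n), ∀ i, x i = (σ i : ℕ) + 1}

namespace Permu

open Finset

variable {n : ℕ}

/-- The vertex of the permutohedron associated with a permutation. -/
def vtx (σ : Equiv.Perm (Fin n)) : Fin n → ℝ := fun i => (σ i : ℕ) + 1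

lemma vtx_injective : Function.Injective (vtx (n := n)) := by
  intro σ τ h
  ext i
  have := congrFun h i
  simpa [vtx] using this

noncomputable def vertFinset (n : ℕ) : Finset (Fin n → ℝ) :=
  Finset.univ.image vtx

lemma mem_vertFinset {x : Fin n → ℝ} : x ∈ vertFinset n ↔ ∃ σ, vtx σ = x := by
  simp [vertFinset]

lemma permutohedron_eq : permutohedron n = convexHull ℝ ↑(vertFinset n) := by
  unfold permutohedron
  congr 1
  ext x
  constructor
  · rintro ⟨σ, h⟩
    exact Finset.mem_coe.mpr (mem_vertFinset.mpr ⟨σ, (funext fun i => (h i).symm)⟩)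
  · intro hx
    obtain ⟨σ, h⟩ := mem_vertFinset.mp (Finset.mem_coe.mp hx)
    exact ⟨σ, fun i => (congrFun h i).symm⟩

/-- The linear functional with coefficient vector `c`. -/
noncomputable def lin (c : Fin n → ℝ) : (Fin n → ℝ) →ₗ[ℝ] ℝ where
  toFun x := ∑ i, c i * x i
  map_add' x y := by
    simp [mul_add, Finset.sum_add_distrib]
  map_smul' r x := by
    simp only [Pi.smul_apply, smul_eq_mul, RingHom.id_apply, Finset.mul_sum]
    exact Finset.sum_congr rfl fun i _ => by ring

@[simp] lemma lin_apply (c x : Fin n → ℝ) : lin c x = ∑ i, c i * x i := rfl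

/-- Value of the functional `c` at the vertex of `σ`. -/
noncomputable def pval (c : Fin n → ℝ) (σ : Equiv.Perm (Fin n)) : ℝ :=
  ∑ i, c i * ((σ i : ℕ) + 1 : ℝ)

lemma lin_vtx (c : Fin n → ℝ) (σ : Equiv.Perm (Fin n)) : lin c (vtx σ) = pval c σ := rfl

/-- `σ` sorts `c`: larger values of `c` get larger positions. -/
def Sorts (c : Fin n → ℝ) (σ : Equiv.Perm (Fin n)) : Prop :=
  ∀ i j, c i < c j → σ i < σ j

lemma sorts_iff_monotone {c : Fin n → ℝ} {σ : Equiv.Perm (Fin n)} :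
    Sorts c σ ↔ Monotone (c ∘ σ.symm) := by
  constructor
  · intro h k k' hkk'
    by_contra hc
    push_neg at hc
    have := h _ _ hc
    simp only [Equiv.apply_symm_apply] at this
    exact absurd (this.trans_le hkk') (lt_irrefl _)
  · intro h i j hij
    by_contra hc
    push_neg at hc
    have : c (σ.symm (σ j)) ≤ c (σ.symm (σ i)) := h hc
    simp only [Equiv.symm_apply_apply] at this
    exact absurd (hij.trans_le this) (lt_irrefl _)

/-- Any two sorting permutations give the same value. -/
lemma pval_eq_of_sorts {c : Fin n → ℝ} {σ τ : Equiv.Perm (Fin n)}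
    (hσ : Sorts c σ) (hτ : Sorts c τ) : pval c σ = pval c τ := by
  have key : c ∘ σ.symm = c ∘ τ.symm := by
    have h1 : c ∘ σ.symm = c ∘ Tuple.sort c := by
      rw [Tuple.comp_sort_eq_comp_iff_monotone]
      exact sorts_iff_monotone.mp hσ
    have h2 : c ∘ τ.symm = c ∘ Tuple.sort c := by
      rw [Tuple.comp_sort_eq_comp_iff_monotone]
      exact sorts_iff_monotone.mp hτ
    rw [h1, h2]
  have e1 : pval c σ = ∑ k, c (σ.symm k) * ((k : ℕ) + 1 : ℝ) := by
    unfold pval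
    exact Fintype.sum_equiv σ _ _ (fun i => by simp)
  have e2 : pval c τ = ∑ k, c (τ.symm k) * ((k : ℕ) + 1 : ℝ) := by
    unfold pval
    exact Fintype.sum_equiv τ _ _ (fun i => by simp)
  rw [e1, e2]
  exact Finset.sum_congr rfl fun k _ => by rw [show c (σ.symm k) = c (τ.symm k) from congrFun key k]

lemma pval_swap (c : Fin n → ℝ) (σ : Equiv.Perm (Fin n)) {i j : Fin n} (hij : i ≠ j) :
    pval c (σ.trans (Equiv.swap (σ i) (σ j)))
      = pval c σ + (c i - c j) * (((σ j : ℕ) : ℝ) - ((σ i : ℕ) : ℝ)) := by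
  set τ := σ.trans (Equiv.swap (σ i) (σ j)) with hτ
  have hτi : τ i = σ j := by simp [hτ, Equiv.swap_apply_left]
  have hτj : τ j = σ i := by simp [hτ, Equiv.swap_apply_right]
  have hτk : ∀ k, k ≠ i → k ≠ j → τ k = σ k := by
    intro k hki hkj
    have h1 : σ k ≠ σ i := fun h => hki (σ.injective h)
    have h2 : σ k ≠ σ j := fun h => hkj (σ.injective h)
    simp [hτ, Equiv.swap_apply_of_ne_of_ne h1 h2]
  have key : pval c τ - pval c σ
      = ∑ k, c k * ((((τ k : ℕ) : ℝ)) - (((σ k : ℕ) : ℝ))) := by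
    unfold pval
    rw [← Finset.sum_sub_distrib]
    exact Finset.sum_congr rfl fun k _ => by ring
  have supp : ∀ k ∈ Finset.univ, k ∉ ({i, j} : Finset (Fin n)) →
      c k * ((((τ k : ℕ) : ℝ)) - (((σ k : ℕ) : ℝ))) = 0 := by
    intro k _ hk
    simp only [Finset.mem_insert, Finset.mem_singleton, not_or] at hk
    rw [hτk k hk.1 hk.2]
    ring
  have : pval c τ - pval c σ = (c i - c j) * (((σ j : ℕ) : ℝ) - ((σ i : ℕ) : ℝ)) := by
    rw [key, ← Finset.sum_subset (Finset.subset_univ ({i, j} : Finset (Fin n))) supp,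
      Finset.sum_pair hij, hτi, hτj]
    ring
  linarith

/-- A maximizing permutation sorts `c`. -/
lemma sorts_of_max {c : Fin n → ℝ} {σ : Equiv.Perm (Fin n)}
    (hmax : ∀ τ, pval c τ ≤ pval c σ) : Sorts c σ := by
  intro i j hcij
  by_contra hc
  push_neg at hc
  have hij : i ≠ j := fun h => absurd (h ▸ hcij) (lt_irrefl _)
  have hlt : σ j < σ i := lt_of_le_of_ne hc (fun h => hij (σ.injective h.symm))
  have h1 := pval_swap c σ hij
  have h2 := hmax (σ.trans (Equiv.swap (σ i) (σ j)))
  have hpos : 0 < (c i - c j) * (((σ j : ℕ) : ℝ) - ((σ i : ℕ) : ℝ)) := by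
    apply mul_pos_of_neg_of_neg
    · linarith
    · have : ((σ j : ℕ) : ℝ) < ((σ i : ℕ) : ℝ) := by exact_mod_cast hlt
      linarith
  linarith

/-- Sorting permutations are exactly the maximizers. -/
lemma max_iff_sorts {c : Fin n → ℝ} {σ : Equiv.Perm (Fin n)} :
    (∀ τ, pval c τ ≤ pval c σ) ↔ Sorts c σ := by
  constructor
  · exact sorts_of_max
  · intro hσ τ
    obtain ⟨ρ, hρ⟩ := Finite.exists_max (pval c)
    have hρs : Sorts c ρ := sorts_of_max hρ
    calc pval c τ ≤ pval c ρ := hρ τ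
    _ = pval c σ := pval_eq_of_sorts hρs hσ

section ArgMax

variable {E : Type*} [AddCommGroup E] [Module ℝ E]

/-- The exposed face of the convex hull of a finite set in direction `l` is the
convex hull of the maximizing points. -/
lemma argmax_hull (V : Finset E) (hV : V.Nonempty) (l : E →ₗ[ℝ] ℝ) :
    {x ∈ convexHull ℝ (V : Set E) | ∀ y ∈ convexHull ℝ (V : Set E), l y ≤ l x}
      = convexHull ℝ ((V.filter fun v => ∀ u ∈ V, l u ≤ l v : Finset E) : Set E) := by
  classical
  obtain ⟨m, hmV, hmax⟩ := V.exists_max_image l hV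
  have hhalf : convexHull ℝ (V : Set E) ⊆ {z | l z ≤ l m} := by
    apply convexHull_min _ (convex_halfSpace_le l.isLinear (l m))
    intro v hv
    exact hmax v hv
  have hmhull : m ∈ convexHull ℝ (V : Set E) := subset_convexHull ℝ _ hmV
  apply Set.Subset.antisymm
  · rintro x ⟨hx, hxmax⟩
    have hxm : l x = l m := le_antisymm (hhalf hx) (hxmax m hmhull)
    rw [Finset.convexHull_eq] at hx
    obtain ⟨w, hw0, hw1, hwx⟩ := hx
    have hzero : ∀ v ∈ V, v ∉ V.filter (fun v => ∀ u ∈ V, l u ≤ l v) → w v = 0 := by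
      intro v hv hvf
      by_contra hwv
      have hwvpos : 0 < w v := lt_of_le_of_ne (hw0 v hv) (Ne.symm hwv)
      have hlv : l v < l m := by
        rcases lt_or_ge (l v) (l m) with h | h
        · exact h
        · exact absurd (Finset.mem_filter.mpr ⟨hv, fun u hu => (hmax u hu).trans h⟩) hvf
      have : l x < l m := by
        have hx2 : l x = ∑ v ∈ V, w v * l v := by
          rw [← hwx, Finset.centerMass, hw1, inv_one, one_smul, map_sum]
          exact Finset.sum_congr rfl fun v _ => by simp
        have : ∑ v ∈ V, w v * l v < ∑ v ∈ V, w v * l m := by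
          apply Finset.sum_lt_sum
          · intro u hu
            exact mul_le_mul_of_nonneg_left (hmax u hu) (hw0 u hu)
          · exact ⟨v, hv, by nlinarith⟩
        rw [hx2]
        calc ∑ v ∈ V, w v * l v < ∑ v ∈ V, w v * l m := this
        _ = l m := by rw [← Finset.sum_mul, hw1, one_mul]
      exact absurd hxm (ne_of_lt this)
    set V' := V.filter (fun v => ∀ u ∈ V, l u ≤ l v) with hV'
    have hsum' : ∑ v ∈ V', w v = 1 := by
      rw [← hw1]
      exact (Finset.sum_subset (Finset.filter_subset _ _)
        (fun v hv hvf => hzero v hv hvf))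
    have hx' : x = V'.centerMass w id := by
      rw [← hwx, Finset.centerMass, Finset.centerMass, hw1, hsum']
      congr 1
      exact (Finset.sum_subset (Finset.filter_subset _ _)
        (fun v hv hvf => by rw [hzero v hv hvf, zero_smul])).symm
    rw [hx']
    exact Finset.centerMass_mem_convexHull _ (fun v hv => hw0 v (Finset.filter_subset _ _ hv))
      (by rw [hsum']; norm_num) (fun v hv => Finset.mem_coe.mpr hv)
  · intro x hx
    have hsub : ((V.filter fun v => ∀ u ∈ V, l u ≤ l v : Finset E) : Set E)
        ⊆ convexHull ℝ (V : Set E) ∩ {z | l m ≤ l z} := by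
      intro v hv
      rw [Finset.mem_coe, Finset.mem_filter] at hv
      exact ⟨subset_convexHull ℝ _ hv.1, hv.2 m hmV⟩
    have hconv : Convex ℝ (convexHull ℝ (V : Set E) ∩ {z | l m ≤ l z}) :=
      (convex_convexHull ℝ _).inter (convex_halfSpace_ge l.isLinear (l m))
    have := convexHull_min hsub hconv hx
    exact ⟨this.1, fun y hy => le_trans (hhalf hy) this.2⟩

end ArgMax

/-- The exposed face of the permutohedron in direction `c`. -/
noncomputable def faceSet (c : Fin n → ℝ) : Set (Fin n → ℝ) :=
  {x ∈ permutohedron n | ∀ y ∈ permutohedron n, lin c y ≤ lin c x}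

lemma vertFinset_nonempty : (vertFinset n).Nonempty :=
  ⟨vtx 1, mem_vertFinset.mpr ⟨1, rfl⟩⟩

lemma vtx_mem_permutohedron (σ : Equiv.Perm (Fin n)) : vtx σ ∈ permutohedron n := by
  rw [permutohedron_eq]
  exact subset_convexHull ℝ _ (mem_vertFinset.mpr ⟨σ, rfl⟩)

lemma filter_vert_eq (c : Fin n → ℝ) :
    ((vertFinset n).filter (fun v => ∀ u ∈ vertFinset n, lin c u ≤ lin c v) : Set (Fin n → ℝ))
      = vtx '' {σ | Sorts c σ} := by
  ext v
  simp only [Finset.coe_filter, Set.mem_setOf_eq, Set.mem_image]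
  constructor
  · rintro ⟨hv, hmax⟩
    obtain ⟨σ, hσ⟩ := mem_vertFinset.mp hv
    refine ⟨σ, ?_, hσ⟩
    apply max_iff_sorts.mp
    intro τ
    have := hmax (vtx τ) (mem_vertFinset.mpr ⟨τ, rfl⟩)
    rw [← hσ] at this
    exact this
  · rintro ⟨σ, hσ, rfl⟩
    refine ⟨mem_vertFinset.mpr ⟨σ, rfl⟩, ?_⟩
    intro u hu
    obtain ⟨τ, rfl⟩ := mem_vertFinset.mp hu
    exact max_iff_sorts.mpr hσ τ

lemma faceSet_eq (c : Fin n → ℝ) :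
    faceSet c = convexHull ℝ (vtx '' {σ | Sorts c σ}) := by
  unfold faceSet
  rw [permutohedron_eq, argmax_hull _ vertFinset_nonempty (lin c), filter_vert_eq]

lemma exists_sorts (c : Fin n → ℝ) : ∃ σ, Sorts c σ := by
  obtain ⟨ρ, hρ⟩ := Finite.exists_max (pval c)
  exact ⟨ρ, sorts_of_max hρ⟩

lemma faceSet_nonempty (c : Fin n → ℝ) : (faceSet c).Nonempty := by
  obtain ⟨σ, hσ⟩ := exists_sorts c
  rw [faceSet_eq]
  exact ⟨vtx σ, subset_convexHull ℝ _ ⟨σ, hσ, rfl⟩⟩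

lemma faceSet_isExposed (c : Fin n → ℝ) : IsExposed ℝ (permutohedron n) (faceSet c) := by
  intro _
  refine ⟨LinearMap.toContinuousLinearMap (lin c), ?_⟩
  unfold faceSet
  simp only [LinearMap.coe_toContinuousLinearMap']

lemma vtx_mem_faceSet_iff {c : Fin n → ℝ} {σ : Equiv.Perm (Fin n)} :
    vtx σ ∈ faceSet c ↔ Sorts c σ := by
  constructor
  · rintro ⟨-, hmax⟩
    apply max_iff_sorts.mp
    intro τ
    exact hmax (vtx τ) (vtx_mem_permutohedron τ)
  · intro hσ
    rw [faceSet_eq]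
    exact subset_convexHull ℝ _ ⟨σ, hσ, rfl⟩

section Partition

variable {P Q : OrderedPartition n}

/-- The index of the block containing `i`. -/
noncomputable def pidx (P : OrderedPartition n) (i : Fin n) : Fin P.len :=
  (P.blocks_cover i).choose

lemma mem_pidx (P : OrderedPartition n) (i : Fin n) : i ∈ P.blocks (pidx P i) :=
  (P.blocks_cover i).choose_spec

lemma pidx_eq_iff {i : Fin n} {ν : Fin P.len} : pidx P i = ν ↔ i ∈ P.blocks ν := by
  constructor
  · rintro rfl; exact mem_pidx P i
  · intro h
    by_contra hne
    exact (Finset.disjoint_left.mp (P.blocks_disjoint _ _ hne) (mem_pidx P i)) h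

/-- `σ` is compatible with `P`: earlier blocks get larger values. -/
def Comp (P : OrderedPartition n) (σ : Equiv.Perm (Fin n)) : Prop :=
  ∀ i j, pidx P i < pidx P j → σ j < σ i

/-- Coefficient vector of the functional exposing the face of `P`. -/
noncomputable def cvec (P : OrderedPartition n) : Fin n → ℝ :=
  fun i => -((pidx P i : ℕ) : ℝ)

lemma cvec_lt_iff {i j : Fin n} : cvec P i < cvec P j ↔ pidx P j < pidx P i := by
  unfold cvec
  rw [neg_lt_neg_iff]
  exact_mod_cast Iff.rfl

lemma sorts_cvec_iff {σ : Equiv.Perm (Fin n)} : Sorts (cvec P) σ ↔ Comp P σ := by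
  constructor
  · intro h i j hij
    exact h j i (cvec_lt_iff.mpr hij)
  · intro h i j hij
    exact h j i (cvec_lt_iff.mp hij)

lemma exists_comp (P : OrderedPartition n) : ∃ σ, Comp P σ := by
  obtain ⟨σ, hσ⟩ := exists_sorts (cvec P)
  exact ⟨σ, sorts_cvec_iff.mp hσ⟩

lemma comp_swap {σ : Equiv.Perm (Fin n)} (hσ : Comp P σ) {a b : Fin n}
    (hab : pidx P a = pidx P b) : Comp P (σ.trans (Equiv.swap (σ a) (σ b))) := by
  intro i j hij
  simp only [Equiv.trans_apply]
  have hswap : ∀ k, σ k ≠ σ a → σ k ≠ σ b → Equiv.swap (σ a) (σ b) (σ k) = σ k :=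
    fun k h1 h2 => Equiv.swap_apply_of_ne_of_ne h1 h2
  have hinj : ∀ {k k' : Fin n}, σ k = σ k' ↔ k = k' := fun {k k'} => σ.apply_eq_iff_eq
  rcases eq_or_ne j a with rfl | hja
  · have h1 : σ b < σ i := hσ i b (by rw [← hab]; exact hij)
    have h2 : σ j < σ i := hσ i j hij
    rw [Equiv.swap_apply_left, hswap i (ne_of_gt h2) (ne_of_gt h1)]
    exact h1
  · rcases eq_or_ne j b with rfl | hjb
    · have h1 : σ j < σ i := hσ i j hij
      have h2 : σ a < σ i := hσ i a (by rw [hab]; exact hij)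
      rw [Equiv.swap_apply_right, hswap i (ne_of_gt h2) (ne_of_gt h1)]
      exact h2
    · have hj1 : σ j ≠ σ a := fun h => hja (hinj.mp h)
      have hj2 : σ j ≠ σ b := fun h => hjb (hinj.mp h)
      rw [hswap j hj1 hj2]
      rcases eq_or_ne i a with rfl | hia
      · have h2 : σ j < σ b := hσ b j (by rw [← hab]; exact hij)
        rw [Equiv.swap_apply_left]
        exact h2
      · rcases eq_or_ne i b with rfl | hib
        · have h2 : σ j < σ a := hσ a j (by rw [hab]; exact hij)
          rw [Equiv.swap_apply_right]
          exact h2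
        · rw [hswap i (fun h => hia (hinj.mp h)) (fun h => hib (hinj.mp h))]
          exact hσ i j hij

/-- The face of the permutohedron associated with an ordered partition. -/
noncomputable def theta (P : OrderedPartition n) : Set (Fin n → ℝ) := faceSet (cvec P)

lemma theta_eq (P : OrderedPartition n) :
    theta P = convexHull ℝ (vtx '' {σ | Comp P σ}) := by
  unfold theta
  rw [faceSet_eq]
  have : {σ : Equiv.Perm (Fin n) | Sorts (cvec P) σ} = {σ | Comp P σ} :=
    Set.ext fun σ => sorts_cvec_iff
  rw [this]

lemma vtx_mem_theta_iff {σ : Equiv.Perm (Fin n)} : vtx σ ∈ theta P ↔ Comp P σ := by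
  unfold theta
  rw [vtx_mem_faceSet_iff]
  exact sorts_cvec_iff

lemma theta_subset_iff : theta Q ⊆ theta P ↔ ∀ σ, Comp Q σ → Comp P σ := by
  constructor
  · intro h σ hσ
    exact vtx_mem_theta_iff.mp (h (vtx_mem_theta_iff.mpr hσ))
  · intro h
    rw [theta_eq, theta_eq]
    apply convexHull_mono
    exact Set.image_mono fun σ hσ => h σ hσ

end Partition

section Refine

variable {P Q : OrderedPartition n}

lemma pidx_of_refines {φ : Fin Q.len → Fin P.len} (hmono : Monotone φ)
    (hblocks : ∀ ν, P.blocks ν = (Finset.univ.filter fun μ => φ μ = ν).biUnion Q.blocks)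
    (i : Fin n) : pidx P i = φ (pidx Q i) := by
  apply pidx_eq_iff.mpr
  rw [hblocks]
  apply Finset.mem_biUnion.mpr
  exact ⟨pidx Q i, Finset.mem_filter.mpr ⟨Finset.mem_univ _, rfl⟩, mem_pidx Q i⟩

lemma refines_imp_subset (h : Q.Refines P) : theta Q ⊆ theta P := by
  obtain ⟨φ, hmono, hblocks⟩ := h
  apply theta_subset_iff.mpr
  intro σ hσ i j hij
  rw [pidx_of_refines hmono hblocks i, pidx_of_refines hmono hblocks j] at hij
  apply hσ i j
  by_contra hc
  push_neg at hc
  exact absurd (hmono hc) (not_le_of_gt hij)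

lemma same_pidx_of_subset (h : ∀ σ, Comp Q σ → Comp P σ) {i j : Fin n}
    (hq : pidx Q i = pidx Q j) : pidx P i = pidx P j := by
  by_contra hne
  obtain ⟨σ, hσ⟩ := exists_comp Q
  have hσ' : Comp Q (σ.trans (Equiv.swap (σ i) (σ j))) := comp_swap hσ hq
  have h1 := h σ hσ
  have h2 := h _ hσ'
  rcases lt_or_gt_of_ne hne with hlt | hgt
  · have a1 : σ j < σ i := h1 i j hlt
    have a2 : (σ.trans (Equiv.swap (σ i) (σ j))) j < (σ.trans (Equiv.swap (σ i) (σ j))) i :=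
      h2 i j hlt
    simp only [Equiv.trans_apply, Equiv.swap_apply_right, Equiv.swap_apply_left] at a2
    exact absurd (a1.trans a2) (lt_irrefl _)
  · have a1 : σ i < σ j := h1 j i hgt
    have a2 : (σ.trans (Equiv.swap (σ i) (σ j))) i < (σ.trans (Equiv.swap (σ i) (σ j))) j :=
      h2 j i hgt
    simp only [Equiv.trans_apply, Equiv.swap_apply_right, Equiv.swap_apply_left] at a2
    exact absurd (a1.trans a2) (lt_irrefl _)

lemma subset_imp_refines (hsub : theta Q ⊆ theta P) : Q.Refines P := by
  have h := theta_subset_iff.mp hsub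
  -- representative of each Q-block
  have hrep : ∀ μ : Fin Q.len, (Q.blocks μ).Nonempty := Q.blocks_nonempty
  classical
  set b : Fin Q.len → Fin n := fun μ => (hrep μ).choose with hb
  have hbmem : ∀ μ, b μ ∈ Q.blocks μ := fun μ => (hrep μ).choose_spec
  have hbidx : ∀ μ, pidx Q (b μ) = μ := fun μ => pidx_eq_iff.mpr (hbmem μ)
  refine ⟨fun μ => pidx P (b μ), ?_, ?_⟩
  · -- monotone
    intro μ μ' hle
    rcases eq_or_lt_of_le hle with rfl | hlt
    · exact le_refl _
    by_contra hc
    push_neg at hc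
    obtain ⟨σ, hσ⟩ := exists_comp Q
    have hP := h σ hσ
    have a1 : σ (b μ') < σ (b μ) := hσ _ _ (by rw [hbidx, hbidx]; exact hlt)
    have a2 : σ (b μ) < σ (b μ') := hP _ _ hc
    exact absurd (a1.trans a2) (lt_irrefl _)
  · -- blocks
    intro ν
    have key : ∀ i : Fin n, pidx P i = pidx P (b (pidx Q i)) := by
      intro i
      exact same_pidx_of_subset h (by rw [hbidx])
    ext i
    simp only [Finset.mem_biUnion, Finset.mem_filter, Finset.mem_univ, true_and]
    constructor
    · intro hi
      refine ⟨pidx Q i, ?_, mem_pidx Q i⟩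
      rw [← key i]
      exact pidx_eq_iff.mpr hi
    · rintro ⟨μ, hφ, hiμ⟩
      have : pidx Q i = μ := pidx_eq_iff.mpr hiμ
      apply pidx_eq_iff.mp
      rw [key i, this]
      exact hφ

end Refine

section OfVec

/-- The ordered partition of level sets of `c`, in decreasing order of value. -/
noncomputable def ofVec (c : Fin n → ℝ) : OrderedPartition n where
  len := (Finset.univ.image c).card
  blocks ν := Finset.univ.filter fun i =>
    c i = ((Finset.univ.image c).orderIsoOfFin rfl ν.rev : ℝ)
  blocks_nonempty := by
    intro ν
    have hmem := ((Finset.univ.image c).orderIsoOfFin rfl ν.rev).2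
    obtain ⟨i, -, hi⟩ := Finset.mem_image.mp hmem
    exact ⟨i, Finset.mem_filter.mpr ⟨Finset.mem_univ _, hi⟩⟩
  blocks_disjoint := by
    intro ν ν' hne
    apply Finset.disjoint_left.mpr
    intro i hi hi'
    have h1 := (Finset.mem_filter.mp hi).2
    have h2 := (Finset.mem_filter.mp hi').2
    apply hne
    have : ((Finset.univ.image c).orderIsoOfFin rfl ν.rev : ℝ)
        = ((Finset.univ.image c).orderIsoOfFin rfl ν'.rev : ℝ) := by rw [← h1, ← h2]
    have := Subtype.coe_injective this
    have := ((Finset.univ.image c).orderIsoOfFin rfl).injective this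
    exact Fin.rev_injective this
  blocks_cover := by
    intro x
    have hmem : c x ∈ Finset.univ.image c := Finset.mem_image_of_mem c (Finset.mem_univ x)
    set k := ((Finset.univ.image c).orderIsoOfFin rfl).symm ⟨c x, hmem⟩ with hk
    refine ⟨k.rev, Finset.mem_filter.mpr ⟨Finset.mem_univ _, ?_⟩⟩
    rw [Fin.rev_rev, hk]
    rw [OrderIso.apply_symm_apply]

lemma cvec_ofVec_lt_iff {c : Fin n → ℝ} {i j : Fin n} :
    c i < c j ↔ cvec (ofVec c) i < cvec (ofVec c) j := by
  have hval : ∀ k : Fin n, c k =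
      ((Finset.univ.image c).orderIsoOfFin rfl (pidx (ofVec c) k).rev : ℝ) := by
    intro k
    have := mem_pidx (ofVec c) k
    exact (Finset.mem_filter.mp this).2
  rw [cvec_lt_iff, hval i, hval j]
  constructor
  · intro hlt
    have : (pidx (ofVec c) i).rev < (pidx (ofVec c) j).rev := by
      by_contra hc
      push_neg at hc
      exact absurd (Subtype.coe_le_coe.mpr
        (((Finset.univ.image c).orderIsoOfFin rfl).monotone hc)) (not_le_of_gt hlt)
    exact Fin.rev_lt_rev.mp this
  · intro hlt
    exact Subtype.coe_lt_coe.mpr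
      (((Finset.univ.image c).orderIsoOfFin rfl).strictMono (Fin.rev_lt_rev.mpr hlt))

lemma faceSet_eq_theta_ofVec (c : Fin n → ℝ) : faceSet c = theta (ofVec c) := by
  unfold theta
  rw [faceSet_eq, faceSet_eq]
  have : {σ : Equiv.Perm (Fin n) | Sorts c σ} = {σ | Sorts (cvec (ofVec c)) σ} := by
    ext σ
    constructor
    · intro h i j hij
      exact h i j (cvec_ofVec_lt_iff.mpr hij)
    · intro h i j hij
      exact h i j (cvec_ofVec_lt_iff.mp hij)
  rw [this]

/-- Every nonempty exposed face of the permutohedron is `theta` of some partition. -/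
lemma surj (F : Set (Fin n → ℝ)) (hne : F.Nonempty) (hexp : IsExposed ℝ (permutohedron n) F) :
    ∃ P : OrderedPartition n, theta P = F := by
  obtain ⟨l, hl⟩ := hexp hne
  set c : Fin n → ℝ := fun i => l fun j => if i = j then 1 else 0 with hc
  have hlc : ∀ x, l x = lin c x := by
    intro x
    rw [lin_apply]
    have := LinearMap.pi_apply_eq_sum_univ (l : (Fin n → ℝ) →ₗ[ℝ] ℝ) x
    simp only [ContinuousLinearMap.coe_coe] at this
    rw [this]
    exact Finset.sum_congr rfl fun i _ => by rw [smul_eq_mul, mul_comm]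
  refine ⟨ofVec c, ?_⟩
  rw [← faceSet_eq_theta_ofVec, hl]
  unfold faceSet
  ext x
  simp only [Set.mem_setOf_eq]
  constructor
  · rintro ⟨h1, h2⟩
    refine ⟨h1, fun y hy => ?_⟩
    rw [hlc y, hlc x]
    exact h2 y hy
  · rintro ⟨h1, h2⟩
    refine ⟨h1, fun y hy => ?_⟩
    rw [← hlc y, ← hlc x]
    exact h2 y hy

end OfVec

section Dim

variable {P : OrderedPartition n}

lemma eq_iio_of_downward (T : Finset (Fin n))
    (h : ∀ k ∈ T, ∀ k' : Fin n, k' ≤ k → k' ∈ T) :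
    T = Finset.univ.filter fun k : Fin n => (k : ℕ) < T.card := by
  ext k
  simp only [Finset.mem_filter, Finset.mem_univ, true_and]
  constructor
  · intro hk
    have hsub : Finset.Iic k ⊆ T := fun k' hk' => h k hk k' (Finset.mem_Iic.mp hk')
    have := Finset.card_le_card hsub
    rw [Fin.card_Iic] at this
    omega
  · intro hk
    by_contra hkT
    have hsub : T ⊆ Finset.Iio k := by
      intro j hj
      rw [Finset.mem_Iio]
      by_contra hc
      push_neg at hc
      exact hkT (h j hj k hc)
    have := Finset.card_le_card hsub
    rw [Fin.card_Iio] at this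
    omega

lemma image_comp_upset {σ : Equiv.Perm (Fin n)} (hσ : Comp P σ) {S : Finset (Fin n)}
    (hS : ∀ i ∈ S, ∀ j, pidx P i ≤ pidx P j → j ∈ S) :
    S.image σ = Finset.univ.filter fun k : Fin n => (k : ℕ) < S.card := by
  have hcard : (S.image σ).card = S.card := Finset.card_image_of_injective _ σ.injective
  rw [← hcard]
  apply eq_iio_of_downward
  intro k hk k' hk'
  obtain ⟨i, hi, rfl⟩ := Finset.mem_image.mp hk
  obtain ⟨j, rfl⟩ := σ.surjective k'
  apply Finset.mem_image_of_mem
  rcases eq_or_lt_of_le hk' with heq | hlt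
  · rw [σ.apply_eq_iff_eq.mp heq]; exact hi
  · by_contra hj
    have : pidx P j < pidx P i := by
      by_contra hc
      push_neg at hc
      exact hj (hS i hi j hc)
    exact absurd (hσ j i this) (not_lt_of_gt hlt)

noncomputable def geSet (P : OrderedPartition n) (ν : Fin P.len) : Finset (Fin n) :=
  Finset.univ.filter fun i => ν ≤ pidx P i

noncomputable def gtSet (P : OrderedPartition n) (ν : Fin P.len) : Finset (Fin n) :=
  Finset.univ.filter fun i => ν < pidx P i

lemma blocks_eq_sdiff (ν : Fin P.len) : P.blocks ν = geSet P ν \ gtSet P ν := by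
  ext i
  simp only [geSet, gtSet, Finset.mem_sdiff, Finset.mem_filter, Finset.mem_univ, true_and]
  constructor
  · intro h
    have := pidx_eq_iff.mpr h
    rw [this]
    exact ⟨le_refl _, lt_irrefl _⟩
  · rintro ⟨h1, h2⟩
    push_neg at h2
    exact pidx_eq_iff.mp (le_antisymm h2 h1)

lemma image_blocks {σ : Equiv.Perm (Fin n)} (hσ : Comp P σ) (ν : Fin P.len) :
    (P.blocks ν).image σ =
      (Finset.univ.filter fun k : Fin n => (k : ℕ) < (geSet P ν).card) \
        (Finset.univ.filter fun k : Fin n => (k : ℕ) < (gtSet P ν).card) := by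
  rw [blocks_eq_sdiff, Finset.image_sdiff _ _ σ.injective,
    image_comp_upset hσ (fun i hi j hj => by
      simp only [geSet, Finset.mem_filter, Finset.mem_univ, true_and] at hi ⊢
      exact hi.trans hj),
    image_comp_upset hσ (fun i hi j hj => by
      simp only [gtSet, Finset.mem_filter, Finset.mem_univ, true_and] at hi ⊢
      exact hi.trans_le hj)]

lemma sum_block_eq {σ τ : Equiv.Perm (Fin n)} (hσ : Comp P σ) (hτ : Comp P τ)
    (ν : Fin P.len) :
    ∑ i ∈ P.blocks ν, ((σ i : ℕ) : ℝ) = ∑ i ∈ P.blocks ν, ((τ i : ℕ) : ℝ) := by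
  have e1 : ∑ i ∈ P.blocks ν, ((σ i : ℕ) : ℝ) = ∑ k ∈ (P.blocks ν).image σ, ((k : ℕ) : ℝ) :=
    (Finset.sum_image (g := ⇑σ) (f := fun k : Fin n => ((k : ℕ) : ℝ))
      (fun i _ j _ h => σ.injective h)).symm
  have e2 : ∑ i ∈ P.blocks ν, ((τ i : ℕ) : ℝ) = ∑ k ∈ (P.blocks ν).image τ, ((k : ℕ) : ℝ) :=
    (Finset.sum_image (g := ⇑τ) (f := fun k : Fin n => ((k : ℕ) : ℝ))
      (fun i _ j _ h => τ.injective h)).symm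
  rw [e1, e2, image_blocks hσ, image_blocks hτ]

/-- The linear map recording block sums. -/
noncomputable def bsum (P : OrderedPartition n) : (Fin n → ℝ) →ₗ[ℝ] (Fin P.len → ℝ) :=
  LinearMap.pi fun ν => ∑ i ∈ P.blocks ν, LinearMap.proj i

@[simp] lemma bsum_apply (v : Fin n → ℝ) (ν : Fin P.len) :
    bsum P v ν = ∑ i ∈ P.blocks ν, v i := by
  simp [bsum, LinearMap.pi_apply, LinearMap.sum_apply, LinearMap.proj_apply]

lemma single_eq (i : Fin n) :
    (fun j => if i = j then (1 : ℝ) else 0) = Pi.single i 1 :=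
  funext fun j => by rw [Pi.single_apply]; exact if_congr eq_comm rfl rfl

lemma bsum_single {ν : Fin P.len} {i : Fin n} (hi : i ∈ P.blocks ν) :
    bsum P (Pi.single i 1) = Pi.single ν 1 := by
  ext ν'
  rw [bsum_apply]
  rcases eq_or_ne ν' ν with rfl | hne
  · rw [Finset.sum_eq_single_of_mem i hi (fun j _ hj => Pi.single_eq_of_ne hj 1),
      Pi.single_eq_same, Pi.single_eq_same]
  · have hnotin : i ∉ P.blocks ν' :=
      fun h => (Finset.disjoint_left.mp (P.blocks_disjoint ν' ν hne) h) hi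
    rw [Pi.single_eq_of_ne hne]
    apply Finset.sum_eq_zero
    intro j hj
    exact Pi.single_eq_of_ne (fun h : j = i => hnotin (h ▸ hj)) 1

lemma bsum_surjective : Function.Surjective (bsum P) := by
  intro w
  classical
  set b : Fin P.len → Fin n := fun ν => (P.blocks_nonempty ν).choose with hb
  have hbmem : ∀ ν, b ν ∈ P.blocks ν := fun ν => (P.blocks_nonempty ν).choose_spec
  refine ⟨∑ ν, w ν • (Pi.single (b ν) 1 : Fin n → ℝ), ?_⟩
  rw [map_sum]
  have : ∀ ν, bsum P (w ν • (Pi.single (b ν) 1 : Fin n → ℝ))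
      = w ν • (Pi.single ν 1 : Fin P.len → ℝ) := by
    intro ν
    rw [map_smul, bsum_single (hbmem ν)]
  rw [Finset.sum_congr rfl fun ν _ => this ν]
  ext ν'
  simp [Pi.single_apply, Finset.sum_ite_eq']

lemma finrank_ker_bsum : Module.finrank ℝ (LinearMap.ker (bsum P)) = n - P.len := by
  have h1 := LinearMap.finrank_range_add_finrank_ker (bsum P)
  rw [LinearMap.range_eq_top.mpr bsum_surjective, finrank_top] at h1
  have e1 : Module.finrank ℝ (Fin P.len → ℝ) = P.len := by
    simp [Module.finrank_fintype_fun_eq_card]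
  have e2 : Module.finrank ℝ (Fin n → ℝ) = n := by
    simp [Module.finrank_fintype_fun_eq_card]
  rw [e1, e2] at h1
  omega

lemma vectorSpan_theta_eq_vert :
    vectorSpan ℝ (theta P) = vectorSpan ℝ (vtx '' {σ | Comp P σ}) := by
  rw [theta_eq, ← direction_affineSpan, affineSpan_convexHull, direction_affineSpan]

lemma vectorSpan_vert_le :
    vectorSpan ℝ (vtx '' {σ | Comp P σ}) ≤ LinearMap.ker (bsum P) := by
  rw [vectorSpan_def]
  apply Submodule.span_le.mpr
  rintro z hz
  obtain ⟨x, hx, y, hy, rfl⟩ := Set.mem_vsub.mp hz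
  obtain ⟨σ, hσ, rfl⟩ := hx
  obtain ⟨τ, hτ, rfl⟩ := hy
  rw [SetLike.mem_coe, LinearMap.mem_ker]
  ext ν
  rw [vsub_eq_sub, map_sub]
  simp only [Pi.sub_apply, bsum_apply, Pi.zero_apply]
  have h1 : ∑ i ∈ P.blocks ν, vtx σ i = ∑ i ∈ P.blocks ν, (((σ i : ℕ) : ℝ) + 1) := rfl
  have h2 : ∑ i ∈ P.blocks ν, vtx τ i = ∑ i ∈ P.blocks ν, (((τ i : ℕ) : ℝ) + 1) := rfl
  rw [h1, h2, Finset.sum_add_distrib, Finset.sum_add_distrib, sum_block_eq hσ hτ ν]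
  ring

lemma single_diff_mem {i j : Fin n} (hij : pidx P i = pidx P j) :
    (Pi.single i 1 : Fin n → ℝ) - Pi.single j 1 ∈ vectorSpan ℝ (vtx '' {σ | Comp P σ}) := by
  rcases eq_or_ne i j with rfl | hne
  · rw [sub_self]
    exact Submodule.zero_mem _
  obtain ⟨σ, hσ⟩ := exists_comp P
  have hσ' : Comp P (σ.trans (Equiv.swap (σ i) (σ j))) := comp_swap hσ hij
  set σ' := σ.trans (Equiv.swap (σ i) (σ j)) with hσ'def
  have hd : vtx σ - vtx σ' = (((σ i : ℕ) : ℝ) - ((σ j : ℕ) : ℝ)) •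
      ((Pi.single i 1 : Fin n → ℝ) - Pi.single j 1) := by
    funext k
    simp only [Pi.sub_apply, Pi.smul_apply, smul_eq_mul, vtx, hσ'def, Equiv.trans_apply]
    rcases eq_or_ne k i with rfl | hki
    · rw [Equiv.swap_apply_left, Pi.single_eq_same, Pi.single_eq_of_ne hne]
      ring
    · rcases eq_or_ne k j with rfl | hkj
      · rw [Equiv.swap_apply_right, Pi.single_eq_of_ne (Ne.symm hne), Pi.single_eq_same]
        ring
      · rw [Equiv.swap_apply_of_ne_of_ne (fun h => hki (σ.injective h))
          (fun h => hkj (σ.injective h)), Pi.single_eq_of_ne hki, Pi.single_eq_of_ne hkj]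
        ring
  have hc : (((σ i : ℕ) : ℝ) - ((σ j : ℕ) : ℝ)) ≠ 0 := by
    apply sub_ne_zero.mpr
    intro h
    have h2 : (σ i : ℕ) = (σ j : ℕ) := by exact_mod_cast h
    exact hne (σ.injective (Fin.val_injective h2))
  have hmem : vtx σ - vtx σ' ∈ vectorSpan ℝ (vtx '' {σ | Comp P σ}) := by
    rw [← vsub_eq_sub]
    exact vsub_mem_vectorSpan ℝ ⟨σ, hσ, rfl⟩ ⟨σ', hσ', rfl⟩
  have : (Pi.single i 1 : Fin n → ℝ) - Pi.single j 1
      = (((σ i : ℕ) : ℝ) - ((σ j : ℕ) : ℝ))⁻¹ • (vtx σ - vtx σ') := by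
    rw [hd, smul_smul, inv_mul_cancel₀ hc, one_smul]
  rw [this]
  exact Submodule.smul_mem _ _ hmem

lemma ker_le_vectorSpan_vert :
    LinearMap.ker (bsum P) ≤ vectorSpan ℝ (vtx '' {σ | Comp P σ}) := by
  intro v hv
  classical
  have hv2 : ∀ ν, ∑ i ∈ P.blocks ν, v i = 0 := by
    intro ν
    have := congrFun (LinearMap.mem_ker.mp hv) ν
    rw [bsum_apply] at this
    exact this
  set b : Fin P.len → Fin n := fun ν => (P.blocks_nonempty ν).choose with hb
  have hbmem : ∀ ν, b ν ∈ P.blocks ν := fun ν => (P.blocks_nonempty ν).choose_spec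
  have hcover : (Finset.univ : Finset (Fin n)) = Finset.univ.biUnion P.blocks := by
    ext i
    simp only [Finset.mem_univ, Finset.mem_biUnion, true_iff]
    exact ⟨pidx P i, by simp, mem_pidx P i⟩
  have hdisj : (↑(Finset.univ : Finset (Fin P.len)) : Set (Fin P.len)).PairwiseDisjoint
      P.blocks := fun ν _ ν' _ hne => P.blocks_disjoint ν ν' hne
  have expand : ∀ ν, ∑ i ∈ P.blocks ν,
        v i • ((Pi.single i 1 : Fin n → ℝ) - Pi.single (b ν) 1)
      = ∑ i ∈ P.blocks ν, v i • (Pi.single i 1 : Fin n → ℝ) := by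
    intro ν
    rw [Finset.sum_congr rfl (fun i _ => smul_sub (v i) _ _), Finset.sum_sub_distrib,
      ← Finset.sum_smul, hv2 ν, zero_smul, sub_zero]
  have hrepr : v = ∑ ν, ∑ i ∈ P.blocks ν,
      v i • ((Pi.single i 1 : Fin n → ℝ) - Pi.single (b ν) 1) := by
    rw [Finset.sum_congr rfl (fun ν _ => expand ν), ← Finset.sum_biUnion hdisj, ← hcover]
    have := pi_eq_sum_univ v
    rw [Finset.sum_congr rfl (fun i _ => by rw [single_eq i])] at this
    exact this
  rw [hrepr]
  apply Submodule.sum_mem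
  intro ν _
  apply Submodule.sum_mem
  intro i hi
  apply Submodule.smul_mem
  apply single_diff_mem
  rw [pidx_eq_iff.mpr hi, pidx_eq_iff.mpr (hbmem ν)]

lemma finrank_theta : Module.finrank ℝ (vectorSpan ℝ (theta P)) = n - P.len := by
  rw [vectorSpan_theta_eq_vert,
    le_antisymm vectorSpan_vert_le ker_le_vectorSpan_vert, finrank_ker_bsum]

end Dim

end Permu

/-- Faces of the permutohedron `P_n` correspond to ordered partitions `(I₁,…,I_p)` of
`{1,…,n}`, the face `[I₁,…,I_p]` having dimension `n - p`; moreover `[J₁,…,J_q]` is a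
subface of `[I₁,…,I_p]` iff `(J₁,…,J_q)` refines `(I₁,…,I_p)`.  (Faces are the
nonempty exposed subsets of `P_n`.) -/
theorem permutohedron_faces_are_ordered_partitions (n : ℕ) :
    ∃ Θ : OrderedPartition n → Set (Fin n → ℝ),
      (∀ P, (Θ P).Nonempty ∧ IsExposed ℝ (permutohedron n) (Θ P)) ∧
      (∀ F : Set (Fin n → ℝ), F.Nonempty → IsExposed ℝ (permutohedron n) F →
        ∃ P, Θ P = F) ∧
      (∀ P Q : OrderedPartition n, Q.Refines P ↔ Θ Q ⊆ Θ P) ∧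
      (∀ P : OrderedPartition n,
        Module.finrank ℝ ↥(vectorSpan ℝ (Θ P)) = n - P.len) := by
  refine ⟨Permu.theta, ?_, ?_, ?_, ?_⟩
  · intro P
    exact ⟨Permu.faceSet_nonempty _, Permu.faceSet_isExposed _⟩
  · intro F hne hexp
    exact Permu.surj F hne hexp
  · intro P Q
    exact ⟨Permu.refines_imp_subset, Permu.subset_imp_refines⟩
  · intro P
    exact Permu.finrank_theta
end
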